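/- Let p_1 < p_2 be odd primes. The unitary Cayley graph of Z/(p_1 p_2)Z is Ramanujan if and only if p_2 ≤ 4·p_1 − 5. -/

import Mathlib

open Polynomial

open Polynomial

/-- The unitary Cayley graph of a finite commutative ring `R`. -/
def unitaryCayley (R : Type*) [CommRing R] [Fintype R] [DecidableEq R] : SimpleGraph R where
  Adj x y := x ≠ y ∧ IsUnit (x - y)
  symm := ⟨by
    intro x y h
    exact ⟨h.1.symm, by simpa using h.2.neg⟩⟩
  loopless := ⟨fun x h => h.1 rfl⟩

instance unitaryCayley.instDecidableRel (R : Type*) [CommRing R] [Fintype R] [DecidableEq R] :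
    DecidableRel (unitaryCayley R).Adj := fun a b =>
  decidable_of_iff (a ≠ b ∧ ∃ c, (a - b) * c = 1)
    (and_congr Iff.rfl isUnit_iff_exists_inv.symm)

/-- An `r`-regular graph is Ramanujan if every adjacency eigenvalue other than `±r`
has absolute value at most `2 * sqrt (r - 1)`. -/
def IsRamanujan {V : Type*} [Fintype V] [DecidableEq V] (G : SimpleGraph V)
    [DecidableRel G.Adj] (r : ℕ) : Prop :=
  ∀ μ ∈ (SimpleGraph.adjMatrix ℝ G).charpoly.roots,
    |μ| ≠ (r : ℝ) → |μ| ≤ 2 * Real.sqrt ((r : ℝ) - 1)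

/-- The energy of a graph: the sum of absolute values of its adjacency eigenvalues. -/
noncomputable def graphEnergy {V : Type*} [Fintype V] [DecidableEq V] (G : SimpleGraph V)
    [DecidableRel G.Adj] : ℝ :=
  ((SimpleGraph.adjMatrix ℝ G).charpoly.roots.map (fun μ => |μ|)).sum

/-! By the Chinese remainder theorem the unitary Cayley graph of `ℤ/p₁p₂ℤ` is that of
`𝔽_{p₁} × 𝔽_{p₂}`, whose adjacency matrix is `A(K_{p₁}) ⊗ A(K_{p₂})`. In terms of the total sum `S`,
the row sums `R_i` and the column sums `C_j` of a vector `v`, this matrix sends `v` to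
`S - R_i - C_j + v(i, j)`. Summing the eigenvalue equation over rows, over columns and over
everything shows that an eigenvalue is `(p₁ - 1)(p₂ - 1)`, `-(p₁ - 1)`, `-(p₂ - 1)` or `1`, and
vectors depending only on the first coordinate with sum zero realise `-(p₂ - 1)`. So the graph is
Ramanujan iff `(p₂ - 1)² ≤ 4((p₁ - 1)(p₂ - 1) - 1)`, i.e. `p₂ < 4p₁ - 3`, which for odd `p₂`
means `p₂ ≤ 4p₁ - 5`. -/

open Matrix Kronecker

theorem Matrix.mem_roots_charpoly_iff {K n : Type*} [Field K] [Fintype n] [DecidableEq n]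
    (M : Matrix n n K) (μ : K) : μ ∈ M.charpoly.roots ↔ ∃ v ≠ 0, M *ᵥ v = μ • v := by
  rw [mem_roots M.charpoly_monic.ne_zero, IsRoot, eval_charpoly, ← exists_mulVec_eq_zero_iff]
  simp only [sub_mulVec, scalar_apply, ← smul_one_eq_diagonal, smul_mulVec, one_mulVec,
    sub_eq_zero, eq_comm]

section kroneckerComplete

variable {α β R : Type*} [Fintype α] [DecidableEq α] [Fintype β] [DecidableEq β]

theorem kronecker_adjMatrix_top_mulVec_apply [CommRing R] (v : α × β → R) (x : α × β) :
    (((⊤ : SimpleGraph α).adjMatrix R ⊗ₖ (⊤ : SimpleGraph β).adjMatrix R) *ᵥ v) x =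
      ∑ y, v y - ∑ j, v (x.1, j) - ∑ i, v (i, x.2) + v x := by
  simp only [mulVec, dotProduct, kroneckerMap_apply,
    SimpleGraph.adjMatrix_completeGraph_eq_of_one_sub_one, Matrix.sub_apply, of_apply,
    Pi.one_apply, one_apply, Fintype.sum_prod_type, sub_mul, one_mul, ite_mul, zero_mul,
    Finset.sum_sub_distrib, Finset.sum_ite_eq, Finset.mem_univ, if_true, Finset.sum_ite_irrel,
    Finset.sum_const_zero]
  ring

theorem kronecker_adjMatrix_top_mulVec_of_sum_eq_zero [CommRing R] {u : α → R}
    (hu : ∑ i, u i = 0) :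
    ((⊤ : SimpleGraph α).adjMatrix R ⊗ₖ (⊤ : SimpleGraph β).adjMatrix R) *ᵥ (fun x => u x.1) =
      (-(Fintype.card β - 1 : R)) • fun x => u x.1 := by
  ext x
  simp only [kronecker_adjMatrix_top_mulVec_apply, Fintype.sum_prod_type, Finset.sum_const,
    ← Finset.mul_sum, hu, Finset.card_univ, nsmul_eq_mul, Pi.smul_apply, smul_eq_mul]
  ring

section eigenvector

variable [CommRing R] {v : α × β → R} {μ : R}
  (h : ((⊤ : SimpleGraph α).adjMatrix R ⊗ₖ (⊤ : SimpleGraph β).adjMatrix R) *ᵥ v = μ • v)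
include h

theorem mul_apply_of_kronecker_adjMatrix_top_mulVec_eq_smul (i : α) (j : β) :
    μ * v (i, j) = ∑ y, v y - ∑ j', v (i, j') - ∑ i', v (i', j) + v (i, j) := by
  have := congrFun h (i, j)
  rwa [kronecker_adjMatrix_top_mulVec_apply, Pi.smul_apply, smul_eq_mul, eq_comm] at this

theorem mul_sum_row_of_kronecker_adjMatrix_top_mulVec_eq_smul (i : α) :
    μ * ∑ j, v (i, j) = (Fintype.card β - 1) * (∑ y, v y - ∑ j, v (i, j)) := by
  rw [Finset.mul_sum]
  simp only [mul_apply_of_kronecker_adjMatrix_top_mulVec_eq_smul h, Finset.sum_add_distrib,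
    Finset.sum_sub_distrib, ← Fintype.sum_prod_type_right, Finset.sum_const, Finset.card_univ,
    nsmul_eq_mul]
  ring

theorem mul_sum_column_of_kronecker_adjMatrix_top_mulVec_eq_smul (j : β) :
    μ * ∑ i, v (i, j) = (Fintype.card α - 1) * (∑ y, v y - ∑ i, v (i, j)) := by
  rw [Finset.mul_sum]
  simp only [mul_apply_of_kronecker_adjMatrix_top_mulVec_eq_smul h, Finset.sum_add_distrib,
    Finset.sum_sub_distrib, ← Fintype.sum_prod_type, Finset.sum_const, Finset.card_univ,
    nsmul_eq_mul]
  ring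

theorem mul_sum_of_kronecker_adjMatrix_top_mulVec_eq_smul :
    μ * ∑ y, v y = (Fintype.card α - 1) * (Fintype.card β - 1) * ∑ y, v y := by
  rw [Fintype.sum_prod_type, Finset.mul_sum, Finset.mul_sum]
  simp only [mul_sum_row_of_kronecker_adjMatrix_top_mulVec_eq_smul h, ← Finset.mul_sum,
    Finset.sum_sub_distrib, ← Fintype.sum_prod_type, Finset.sum_const, Finset.card_univ,
    nsmul_eq_mul]
  ring

end eigenvector

variable [Field R]

theorem eq_or_eq_of_kronecker_adjMatrix_top_mulVec_eq_smul {v : α × β → R} {μ : R}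
    (hv : v ≠ 0)
    (h : ((⊤ : SimpleGraph α).adjMatrix R ⊗ₖ (⊤ : SimpleGraph β).adjMatrix R) *ᵥ v = μ • v) :
    μ = (Fintype.card α - 1) * (Fintype.card β - 1) ∨ μ = -(Fintype.card α - 1) ∨
      μ = -(Fintype.card β - 1) ∨ μ = 1 := by
  by_contra! hμ
  obtain ⟨hab, ha, hb, h1⟩ := hμ
  have hsum : ∑ y, v y = 0 := by
    refine eq_zero_of_ne_zero_of_mul_left_eq_zero (sub_ne_zero.mpr hab) ?_
    linear_combination mul_sum_of_kronecker_adjMatrix_top_mulVec_eq_smul h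
  have hrow (i : α) : ∑ j, v (i, j) = 0 := by
    refine eq_zero_of_ne_zero_of_mul_left_eq_zero (x := μ + (Fintype.card β - 1)) ?_ ?_
    · exact fun h0 => hb (eq_neg_of_add_eq_zero_left h0)
    · linear_combination mul_sum_row_of_kronecker_adjMatrix_top_mulVec_eq_smul h i +
        (Fintype.card β - 1 : R) * hsum
  have hcol (j : β) : ∑ i, v (i, j) = 0 := by
    refine eq_zero_of_ne_zero_of_mul_left_eq_zero (x := μ + (Fintype.card α - 1)) ?_ ?_
    · exact fun h0 => ha (eq_neg_of_add_eq_zero_left h0)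
    · linear_combination mul_sum_column_of_kronecker_adjMatrix_top_mulVec_eq_smul h j +
        (Fintype.card α - 1 : R) * hsum
  refine hv (funext fun x => eq_zero_of_ne_zero_of_mul_left_eq_zero (sub_ne_zero.mpr h1) ?_)
  linear_combination mul_apply_of_kronecker_adjMatrix_top_mulVec_eq_smul h x.1 x.2 + hsum -
    hrow x.1 - hcol x.2

theorem eq_or_eq_of_mem_roots_charpoly_kronecker_adjMatrix_top {μ : R}
    (h : μ ∈ ((⊤ : SimpleGraph α).adjMatrix R ⊗ₖ (⊤ : SimpleGraph β).adjMatrix R).charpoly.roots) :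
    μ = (Fintype.card α - 1) * (Fintype.card β - 1) ∨ μ = -(Fintype.card α - 1) ∨
      μ = -(Fintype.card β - 1) ∨ μ = 1 := by
  obtain ⟨v, hv, hμ⟩ := (mem_roots_charpoly_iff _ μ).mp h
  exact eq_or_eq_of_kronecker_adjMatrix_top_mulVec_eq_smul hv hμ

theorem neg_card_sub_one_mem_roots_charpoly_kronecker_adjMatrix_top [Nontrivial α] [Nonempty β] :
    -(Fintype.card β - 1 : R) ∈
      ((⊤ : SimpleGraph α).adjMatrix R ⊗ₖ (⊤ : SimpleGraph β).adjMatrix R).charpoly.roots := by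
  obtain ⟨i, j, hij⟩ := exists_pair_ne α
  have hu : ∑ k, (Pi.single i 1 - Pi.single j 1 : α → R) k = 0 := by simp
  refine (mem_roots_charpoly_iff _ _).mpr ⟨_, fun h => ?_,
    kronecker_adjMatrix_top_mulVec_of_sum_eq_zero hu⟩
  have := congrFun h (i, Classical.arbitrary β)
  simp [hij] at this

end kroneckerComplete

section unitaryCayley

variable {R S : Type*} [CommRing R] [Fintype R] [DecidableEq R] [CommRing S] [Fintype S]
  [DecidableEq S]

theorem unitaryCayley_adj_iff [Nontrivial R] {x y : R} :
    (unitaryCayley R).Adj x y ↔ IsUnit (x - y) :=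
  ⟨And.right, fun h => ⟨sub_ne_zero.mp h.ne_zero, h⟩⟩

def RingEquiv.unitaryCayleyIso (e : R ≃+* S) : unitaryCayley R ≃g unitaryCayley S where
  toEquiv := e.toEquiv
  map_rel_iff' {x y} := by
    change e x ≠ e y ∧ IsUnit (e x - e y) ↔ x ≠ y ∧ IsUnit (x - y)
    rw [← map_sub, MulEquiv.isUnit_map, e.injective.ne_iff]

theorem isRamanujan_iff_of_iso {V W : Type*} [Fintype V] [DecidableEq V] [Fintype W]
    [DecidableEq W] {G : SimpleGraph V} {H : SimpleGraph W} [DecidableRel G.Adj]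
    [DecidableRel H.Adj] (e : G ≃g H) (r : ℕ) : IsRamanujan G r ↔ IsRamanujan H r := by
  rw [IsRamanujan, IsRamanujan, ← e.reindex_adjMatrix ℝ, charpoly_reindex]

theorem adjMatrix_unitaryCayley_prod (α : Type*) [MulZeroOneClass α] {F K : Type*} [Field F]
    [Fintype F] [DecidableEq F] [Field K] [Fintype K] [DecidableEq K] :
    (unitaryCayley (F × K)).adjMatrix α =
      ((⊤ : SimpleGraph F).adjMatrix α ⊗ₖ (⊤ : SimpleGraph K).adjMatrix α) := by
  ext x y
  simp only [SimpleGraph.adjMatrix_apply, unitaryCayley_adj_iff, Prod.isUnit_iff,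
    isUnit_iff_ne_zero, Prod.fst_sub, Prod.snd_sub, sub_ne_zero, kroneckerMap_apply,
    SimpleGraph.top_adj]
  split_ifs <;> simp_all

theorem isRamanujan_unitaryCayley_prod_iff {F K : Type*} [Field F] [Fintype F] [DecidableEq F]
    [Field K] [Fintype K] [DecidableEq K] (hF : 3 ≤ Fintype.card F)
    (hFK : Fintype.card F ≤ Fintype.card K) :
    IsRamanujan (unitaryCayley (F × K)) ((Fintype.card F - 1) * (Fintype.card K - 1)) ↔
      ((Fintype.card K - 1 : ℕ) : ℝ) ≤
        2 * √(((Fintype.card F - 1) * (Fintype.card K - 1) : ℕ) - 1) := by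
  rw [IsRamanujan, adjMatrix_unitaryCayley_prod, Nat.cast_mul, Nat.cast_pred Fintype.card_pos,
    Nat.cast_pred Fintype.card_pos]
  set a : ℝ := Fintype.card F - 1
  set b : ℝ := Fintype.card K - 1
  have ha : 2 ≤ a := by
    have : (3 : ℝ) ≤ Fintype.card F := by exact_mod_cast hF
    linarith
  have hab : a ≤ b := by simp only [a, b]; gcongr
  constructor
  · intro h
    have hb := h _ neg_card_sub_one_mem_roots_charpoly_kronecker_adjMatrix_top
    rw [abs_neg, abs_of_nonneg (by linarith)] at hb
    exact hb (by nlinarith)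
  · intro h μ hμ hne
    rcases eq_or_eq_of_mem_roots_charpoly_kronecker_adjMatrix_top hμ with rfl | rfl | rfl | rfl
    · exact absurd (abs_of_nonneg (by nlinarith)) hne
    · rw [abs_neg, abs_of_nonneg (by linarith)]; linarith
    · rw [abs_neg, abs_of_nonneg (by linarith)]; exact h
    · rw [abs_one]; linarith

end unitaryCayley

theorem le_two_mul_sqrt_mul_sub_one_iff {a b : ℕ} (hb : 4 ≤ b) :
    (b : ℝ) ≤ 2 * √((a * b : ℕ) - 1) ↔ b < 4 * a := by
  rw [← div_le_iff₀' two_pos, Real.le_sqrt' (by positivity), div_pow, div_le_iff₀ (by norm_num)]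
  have hcast : (b : ℝ) ^ 2 ≤ ((a * b : ℕ) - 1) * 2 ^ 2 ↔ b ^ 2 + 4 ≤ 4 * (a * b) := by
    rw [← Nat.cast_le (α := ℝ)]
    push_cast
    constructor <;> intro h <;> linarith
  rw [hcast]
  constructor <;> intro h <;> nlinarith

/-- For odd primes `p₁ < p₂`, the unitary Cayley graph of `ℤ/(p₁p₂)ℤ` is Ramanujan iff
`p₂ ≤ 4p₁ - 5`. -/
theorem stmt_13 (p₁ p₂ : ℕ) (hp₁ : p₁.Prime) (hp₂ : p₂.Prime)
    (h₁ : p₁ ≠ 2) (h₂ : p₂ ≠ 2) (hlt : p₁ < p₂) :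
    haveI : NeZero (p₁ * p₂) := ⟨mul_ne_zero hp₁.pos.ne' hp₂.pos.ne'⟩
    (IsRamanujan (unitaryCayley (ZMod (p₁ * p₂))) ((p₁ * p₂).totient) ↔ p₂ ≤ 4 * p₁ - 5) := by
  have : NeZero (p₁ * p₂) := ⟨mul_ne_zero hp₁.pos.ne' hp₂.pos.ne'⟩
  have := Fact.mk hp₁
  have := Fact.mk hp₂
  have hcop : p₁.Coprime p₂ := (Nat.coprime_primes hp₁ hp₂).mpr hlt.ne
  have hp₁3 : 3 ≤ p₁ := hp₁.two_le.lt_of_ne' h₁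
  obtain ⟨k, hk⟩ := hp₂.odd_of_ne_two h₂
  have hramanujan := isRamanujan_unitaryCayley_prod_iff (F := ZMod p₁) (K := ZMod p₂)
    (by rwa [ZMod.card]) (by simpa using hlt.le)
  simp only [ZMod.card] at hramanujan
  rw [Nat.totient_mul hcop, Nat.totient_prime hp₁, Nat.totient_prime hp₂,
    isRamanujan_iff_of_iso (ZMod.chineseRemainder hcop).unitaryCayleyIso, hramanujan,
    le_two_mul_sqrt_mul_sub_one_iff (by omega)]
  omega
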